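/- For integers n ≥ 4, g = n(n+1), a = (n²-1)(g-1), and L² = 2g-2, one has (a-1)(2g-2) - 2 + 2 > a(2g-2)/n; that is, γ_C + 2 > μ(E|_C), contradicting the consequence (*) of Mercat's conjecture. -/

import Mathlib

/-!
Dividing by `2g - 2 > 0`, the inequality `(a - 1)(2g - 2) > a(2g - 2)/n` becomes `n < (n - 1) a`,
which holds with a wide margin since `a = (n² - 1)(g - 1)` is already larger than `n`.
-/

lemma div_lt_sub_one_mul {K : Type*} [Field K] [LinearOrder K] [IsStrictOrderedRing K]
    {a x n : K} (hx : 0 < x) (hn : 0 < n) (h : n < (n - 1) * a) :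
    a * x / n < (a - 1) * x := by
  rw [div_lt_iff₀ hn]
  nlinarith

lemma lt_sub_one_mul_of_four_le {n g a : ℤ} (hn : 4 ≤ n) (hg : 1 < g)
    (ha : a = (n ^ 2 - 1) * (g - 1)) : n < (n - 1) * a := by
  have hsq : n < n ^ 2 - 1 := by nlinarith
  have ha : n < a := by rw [ha]; nlinarith
  nlinarith

/-- For `n ≥ 4`, `g = n(n+1)`, `a = (n²-1)(g-1)`, `L² = 2g-2`:
`γ_C + 2 = (a-1)(2g-2) > a(2g-2)/n = μ(E|_C)`, contradicting Mercat's conjecture. -/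
theorem stmt8 (n g a : ℤ) (hn : 4 ≤ n) (hg : g = n * (n + 1))
    (ha : a = (n ^ 2 - 1) * (g - 1)) :
    ((a : ℚ) - 1) * (2 * g - 2) - 2 + 2 > a * (2 * g - 2) / n := by
  have hg₁ : 1 < g := by rw [hg]; nlinarith
  have hgq : (1 : ℚ) < g := by exact_mod_cast hg₁
  have hnq : (0 : ℚ) < n := by exact_mod_cast (by omega : (0 : ℤ) < n)
  have key : (n : ℚ) < (n - 1) * a := by exact_mod_cast lt_sub_one_mul_of_four_le hn hg₁ ha
  rw [sub_add_cancel]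
  exact div_lt_sub_one_mul (by linarith) hnq key
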